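/- Let H be a weak bialgebra and g ∈ H a group-like element. Then the map β: H_s → H_s ⊗ H, x ↦ x_0 ⊗ (g x_1), where x ↦ x_0⊗x_1 denotes the standard coaction x ↦ x'⊗x'' of H on H_s, defines a right H-comodule structure on the vector space H_s (denoted H_s^g). -/

import Mathlib

open TensorProduct

noncomputable section

/-- The data of a (candidate) weak bialgebra over `k`: an associative unital
multiplication `mul` with unit `one`, a comultiplication `comul` and a counit `counit`. -/
structure WBData (k : Type) [CommRing k] (H : Type) [AddCommGroup H] [Module k H] where
  mul : H →ₗ[k] H →ₗ[k] H
  one : H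
  comul : H →ₗ[k] H ⊗[k] H
  counit : H →ₗ[k] k

namespace WBData

variable {k : Type} [CommRing k] {H : Type} [AddCommGroup H] [Module k H] (W : WBData k H)

/-- Multiplication as a map on the tensor product. -/
def mulT : H ⊗[k] H →ₗ[k] H := TensorProduct.lift W.mul

/-- The induced multiplication on `H ⊗ H`: `(a⊗b)·(c⊗d) = (ac)⊗(bd)`. -/
def mul₂ (x y : H ⊗[k] H) : H ⊗[k] H :=
  TensorProduct.map W.mulT W.mulT (TensorProduct.tensorTensorTensorComm k H H H H (x ⊗ₜ[k] y))

/-- The source counital map `ε_s(h) = 1' ε(h 1'')`. -/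
def εsMap : H →ₗ[k] H :=
  (TensorProduct.lid k H).toLinearMap
    ∘ₗ LinearMap.rTensor H (W.counit ∘ₗ W.mulT)
    ∘ₗ (TensorProduct.assoc k H H H).symm.toLinearMap
    ∘ₗ (TensorProduct.mk k H (H ⊗[k] H)).flip ((TensorProduct.comm k H H) (W.comul W.one))

/-- The target counital map `ε_t(h) = ε(1' h) 1''`. -/
def εtMap : H →ₗ[k] H :=
  (TensorProduct.rid k H).toLinearMap
    ∘ₗ LinearMap.lTensor H (W.counit ∘ₗ W.mulT)
    ∘ₗ (TensorProduct.assoc k H H H).toLinearMap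
    ∘ₗ (TensorProduct.mk k (H ⊗[k] H) H) ((TensorProduct.comm k H H) (W.comul W.one))

/-- The map `\bar ε_s(h) = 1' ε(1'' h)`. -/
def barεsMap : H →ₗ[k] H :=
  (TensorProduct.rid k H).toLinearMap
    ∘ₗ LinearMap.lTensor H (W.counit ∘ₗ W.mulT)
    ∘ₗ (TensorProduct.assoc k H H H).toLinearMap
    ∘ₗ (TensorProduct.mk k (H ⊗[k] H) H) (W.comul W.one)

/-- The source base algebra `H_s = ε_s(H)`. -/
def Hs : Submodule k H := LinearMap.range W.εsMap

/-- The target base algebra `H_t = ε_t(H)`. -/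
def Ht : Submodule k H := LinearMap.range W.εtMap

/-- The axioms of a weak bialgebra for the data `W`. -/
structure IsWeakBialgebra : Prop where
  mul_assoc : ∀ x y z : H, W.mul (W.mul x y) z = W.mul x (W.mul y z)
  one_mul : ∀ x : H, W.mul W.one x = x
  mul_one : ∀ x : H, W.mul x W.one = x
  coassoc : ∀ x : H,
    (TensorProduct.assoc k H H H) (LinearMap.rTensor H W.comul (W.comul x)) =
      LinearMap.lTensor H W.comul (W.comul x)
  counit_left : ∀ x : H,
    (TensorProduct.lid k H) (LinearMap.rTensor H W.counit (W.comul x)) = x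
  counit_right : ∀ x : H,
    (TensorProduct.rid k H) (LinearMap.lTensor H W.counit (W.comul x)) = x
  comul_mul : ∀ x y : H, W.comul (W.mul x y) = W.mul₂ (W.comul x) (W.comul y)
  counit_mul : ∀ x y z : H, W.counit (W.mul (W.mul x y) z) =
    (LinearMap.mul' k k)
      (TensorProduct.map (W.counit ∘ₗ W.mul x) (W.counit ∘ₗ W.mul.flip z) (W.comul y))
  counit_mul_op : ∀ x y z : H, W.counit (W.mul (W.mul x y) z) =
    (LinearMap.mul' k k)
      (TensorProduct.map (W.counit ∘ₗ W.mul x) (W.counit ∘ₗ W.mul.flip z)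
        ((TensorProduct.comm k H H) (W.comul y)))
  comul_one : LinearMap.rTensor H W.comul (W.comul W.one) =
    (LinearMap.rTensor H (TensorProduct.comm k H H).toLinearMap)
      ((TensorProduct.assoc k H H H).symm
        ((TensorProduct.map W.mulT LinearMap.id)
          ((TensorProduct.tensorTensorTensorComm k H H H H)
            (((TensorProduct.comm k H H) (W.comul W.one)) ⊗ₜ[k] (W.comul W.one)))))
  comul_one_op : LinearMap.rTensor H W.comul (W.comul W.one) =
    (LinearMap.rTensor H (TensorProduct.comm k H H).toLinearMap)
      ((TensorProduct.assoc k H H H).symm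
        ((TensorProduct.map (W.mulT ∘ₗ (TensorProduct.comm k H H).toLinearMap) LinearMap.id)
          ((TensorProduct.tensorTensorTensorComm k H H H H)
            (((TensorProduct.comm k H H) (W.comul W.one)) ⊗ₜ[k] (W.comul W.one)))))

/-- `g` is right group-like: `Δ g = (g⊗g)·Δ1` and `ε_s(g) = 1`. -/
def IsRightGroupLike (g : H) : Prop :=
  W.comul g = W.mul₂ (g ⊗ₜ[k] g) (W.comul W.one) ∧ W.εsMap g = W.one

/-- `g` is left group-like: `Δ g = Δ1·(g⊗g)` and `ε_t(g) = 1`. -/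
def IsLeftGroupLike (g : H) : Prop :=
  W.comul g = W.mul₂ (W.comul W.one) (g ⊗ₜ[k] g) ∧ W.εtMap g = W.one

/-- `g` is group-like if it is both right and left group-like. -/
def IsGroupLike (g : H) : Prop := W.IsRightGroupLike g ∧ W.IsLeftGroupLike g

/-- The coaction `x ↦ x' ⊗ (g x'')` of `H` on (the ambient space of) `H_s`,
defining the comodule `H_s^g` for a group-like `g`. -/
def βg (g : H) : H →ₗ[k] H ⊗[k] H :=
  LinearMap.lTensor H (W.mul g) ∘ₗ W.comul

/-- A coaction `β : V → V ⊗ H` is a (right) comodule structure if it is coassociative and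
counital. -/
def IsCoaction {V : Type} [AddCommGroup V] [Module k V] (β : V →ₗ[k] V ⊗[k] H) : Prop :=
  (∀ v : V, (TensorProduct.assoc k V H H) (LinearMap.rTensor H β (β v)) =
      LinearMap.lTensor V W.comul (β v)) ∧
  (∀ v : V, (TensorProduct.rid k V) (LinearMap.lTensor V W.counit (β v)) = v)

/-- The truncation idempotent `P_{V,W}(v⊗w) = (v₀⊗w₀) ε(v₁w₁)` of two comodules, expressed
on the ambient tensor product. -/
def truncP {V U : Type} [AddCommGroup V] [Module k V] [AddCommGroup U] [Module k U]
    (βa : V →ₗ[k] V ⊗[k] H) (βb : U →ₗ[k] U ⊗[k] H) : V ⊗[k] U →ₗ[k] V ⊗[k] U :=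
  (TensorProduct.rid k (V ⊗[k] U)).toLinearMap
    ∘ₗ LinearMap.lTensor (V ⊗[k] U) (W.counit ∘ₗ W.mulT)
    ∘ₗ (TensorProduct.tensorTensorTensorComm k V H U H).toLinearMap
    ∘ₗ TensorProduct.map βa βb

/-- The coaction `v⊗w ↦ (v₀⊗w₀)⊗(v₁w₁)` on the (truncated) tensor product of two comodules,
expressed on the ambient tensor product. -/
def βtens {V U : Type} [AddCommGroup V] [Module k V] [AddCommGroup U] [Module k U]
    (βa : V →ₗ[k] V ⊗[k] H) (βb : U →ₗ[k] U ⊗[k] H) : V ⊗[k] U →ₗ[k] (V ⊗[k] U) ⊗[k] H :=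
  LinearMap.lTensor (V ⊗[k] U) W.mulT
    ∘ₗ (TensorProduct.tensorTensorTensorComm k V H U H).toLinearMap
    ∘ₗ TensorProduct.map βa βb

/-- The two-sided ideal (with respect to `W.mul`) generated by a set `s`. -/
def twoSidedIdeal (s : Set H) : Submodule k H :=
  sInf {J : Submodule k H | s ⊆ J ∧ ∀ x : H, ∀ y ∈ J, W.mul x y ∈ J ∧ W.mul y x ∈ J}

/-- Powers of an element with respect to `W.mul`. -/
def powW (g : H) : ℕ → H
  | 0 => W.one
  | n + 1 => W.mul (powW g n) g

/-- An antipode for `W`, making it a weak Hopf algebra. -/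
def IsAntipode (S : H →ₗ[k] H) : Prop :=
  (∀ x : H, W.mulT (LinearMap.lTensor H S (W.comul x)) = W.εtMap x) ∧
  (∀ x : H, W.mulT (LinearMap.rTensor H S (W.comul x)) = W.εsMap x) ∧
  (∀ x : H, W.mulT (LinearMap.lTensor H S
      (LinearMap.rTensor H (W.mulT ∘ₗ LinearMap.rTensor H S)
        (LinearMap.rTensor H W.comul (W.comul x)))) = S x)

end WBData

/-- A homomorphism of weak bialgebras: a linear map which is a homomorphism of unital
algebras and of counital coalgebras. -/
def IsWBHom {k : Type} [CommRing k] {H H' : Type} [AddCommGroup H] [Module k H]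
    [AddCommGroup H'] [Module k H'] (W : WBData k H) (W' : WBData k H')
    (f : H →ₗ[k] H') : Prop :=
  (∀ x y : H, f (W.mul x y) = W'.mul (f x) (f y)) ∧
  f W.one = W'.one ∧
  (∀ x : H, W'.comul (f x) = TensorProduct.map f f (W.comul x)) ∧
  (∀ x : H, W'.counit (f x) = W.counit x)

end

/-!
If `Δ g = (g ⊗ g) Δ 1`, then `Δ (g h) = (g ⊗ g) Δ h` because `Δ 1 · Δ h = Δ (1 h)`; so
`x ↦ x' ⊗ g x''` is coassociative as soon as `Δ` is. Evaluating a leg of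
`(Δ ⊗ id) Δ 1 = 1' ⊗ 1''' 1'' ⊗ 1''''` (with `1''' ⊗ 1''''` a second copy of `Δ 1`) gives
`Δ (ε_s h) = 1' ⊗ ε_s(h) 1''` and `ε_s(1') ⊗ 1'' = Δ 1`, so for `x ∈ H_s` the first leg of
`x' ⊗ g x''` lies in `H_s`. Counitality on `H_s` reduces to `ε_s (g x) = ε_s (ε_s(g) x) = ε_s x`,
a consequence of `ε (ε_s(a) b) = ε (a b)`.
-/

namespace WBData

open LinearMap TensorProduct

variable {k : Type} [CommRing k] {H : Type} [AddCommGroup H] [Module k H] (W : WBData k H)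

lemma mul₂_tmul (a b c d : H) :
    W.mul₂ (a ⊗ₜ[k] b) (c ⊗ₜ[k] d) = W.mul a c ⊗ₜ[k] W.mul b d := rfl

lemma mul₂_add_left (x x' y : H ⊗[k] H) : W.mul₂ (x + x') y = W.mul₂ x y + W.mul₂ x' y := by
  simp [mul₂, add_tmul]

lemma mul₂_add_right (x y y' : H ⊗[k] H) : W.mul₂ x (y + y') = W.mul₂ x y + W.mul₂ x y' := by
  simp [mul₂, tmul_add]

lemma mul₂_zero_left (y : H ⊗[k] H) : W.mul₂ 0 y = 0 := by simp [mul₂]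

lemma mul₂_zero_right (x : H ⊗[k] H) : W.mul₂ x 0 = 0 := by simp [mul₂]

lemma mul₂_tmul_left (a b : H) (t : H ⊗[k] H) :
    W.mul₂ (a ⊗ₜ[k] b) t = map (W.mul a) (W.mul b) t := by
  induction t using TensorProduct.induction_on with
  | zero => rw [mul₂_zero_right, map_zero]
  | add t t' ht ht' => rw [mul₂_add_right, map_add, ht, ht']
  | tmul c d => rfl

lemma mul₂_assoc (hW : W.IsWeakBialgebra) (x y z : H ⊗[k] H) :
    W.mul₂ (W.mul₂ x y) z = W.mul₂ x (W.mul₂ y z) := by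
  induction x using TensorProduct.induction_on with
  | zero => simp only [mul₂_zero_left]
  | add x x' hx hx' => simp only [mul₂_add_left, hx, hx']
  | tmul a b =>
    induction y using TensorProduct.induction_on with
    | zero => simp only [mul₂_zero_left, mul₂_zero_right]
    | add y y' hy hy' => simp only [mul₂_add_left, mul₂_add_right, hy, hy']
    | tmul c d =>
      induction z using TensorProduct.induction_on with
      | zero => simp only [mul₂_zero_right]
      | add z z' hz hz' => simp only [mul₂_add_right, hz, hz']
      | tmul e f => simp only [mul₂_tmul, hW.mul_assoc]

lemma comul_mul_of_comul_eq (hW : W.IsWeakBialgebra) {g : H}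
    (hg : W.comul g = W.mul₂ (g ⊗ₜ[k] g) (W.comul W.one)) (h : H) :
    W.comul (W.mul g h) = map (W.mul g) (W.mul g) (W.comul h) := by
  rw [hW.comul_mul, hg, W.mul₂_assoc hW, ← hW.comul_mul, hW.one_mul, mul₂_tmul_left]

lemma βg_coassoc (hW : W.IsWeakBialgebra) {g : H}
    (hg : W.comul g = W.mul₂ (g ⊗ₜ[k] g) (W.comul W.one)) (x : H) :
    TensorProduct.assoc k H H H (rTensor H (W.βg g) (W.βg g x)) =
      lTensor H W.comul (W.βg g x) := by
  have hcomul : lTensor H (map (W.mul g) (W.mul g)) ∘ₗ lTensor H W.comul =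
      lTensor H W.comul ∘ₗ lTensor H (W.mul g) := by
    rw [← lTensor_comp, ← lTensor_comp]
    congr 1
    exact LinearMap.ext fun h => (W.comul_mul_of_comul_eq hW hg h).symm
  calc TensorProduct.assoc k H H H (rTensor H (W.βg g) (W.βg g x))
      = TensorProduct.assoc k H H H
          (map (map id (W.mul g)) (W.mul g) (rTensor H W.comul (W.comul x))) := by
        rw [βg, comp_apply, ← comp_apply (rTensor H _), rTensor_comp_lTensor, ← map_comp_rTensor]
        rfl
    _ = map id (map (W.mul g) (W.mul g)) (lTensor H W.comul (W.comul x)) := by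
        rw [← map_map_assoc, hW.coassoc]
    _ = lTensor H W.comul (W.βg g x) := LinearMap.congr_fun hcomul (W.comul x)

lemma εsMap_eq_sum {S : Finset (H × H)}
    (hS : W.comul W.one = ∑ p ∈ S, p.1 ⊗ₜ[k] p.2) (h : H) :
    W.εsMap h = ∑ p ∈ S, W.counit (W.mul h p.2) • p.1 := by
  simp [εsMap, hS, map_sum, mulT]

lemma counit_mul_eq_sum (hW : W.IsWeakBialgebra) {S : Finset (H × H)}
    (hS : W.comul W.one = ∑ p ∈ S, p.1 ⊗ₜ[k] p.2) (x z : H) :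
    W.counit (W.mul x z) = ∑ p ∈ S, W.counit (W.mul x p.2) * W.counit (W.mul p.1 z) := by
  rw [← hW.mul_one x, hW.counit_mul_op, hW.mul_one, hS]
  simp [map_sum]

lemma rTensor_comul_comul_one_eq_sum (hW : W.IsWeakBialgebra) {S : Finset (H × H)}
    (hS : W.comul W.one = ∑ p ∈ S, p.1 ⊗ₜ[k] p.2) :
    rTensor H W.comul (W.comul W.one) =
      ∑ p ∈ S, ∑ q ∈ S, (p.1 ⊗ₜ[k] W.mul q.1 p.2) ⊗ₜ[k] q.2 := by
  rw [hW.comul_one_op]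
  conv_lhs => rw [hS]
  rw [Finset.sum_comm]
  simp [sum_tmul, tmul_sum, map_sum, mulT, tensorTensorTensorComm_tmul]

lemma counit_εsMap_mul (hW : W.IsWeakBialgebra) (x z : H) :
    W.counit (W.mul (W.εsMap x) z) = W.counit (W.mul x z) := by
  obtain ⟨S, hS⟩ := exists_finset (W.comul W.one)
  simp [W.εsMap_eq_sum hS, W.counit_mul_eq_sum hW hS x z, map_sum]

lemma εsMap_εsMap_mul (hW : W.IsWeakBialgebra) (h x : H) :
    W.εsMap (W.mul (W.εsMap h) x) = W.εsMap (W.mul h x) := by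
  obtain ⟨S, hS⟩ := exists_finset (W.comul W.one)
  rw [W.εsMap_eq_sum hS, W.εsMap_eq_sum hS (W.mul h x)]
  simp only [hW.mul_assoc, W.counit_εsMap_mul hW]

lemma εsMap_idem (hW : W.IsWeakBialgebra) (h : H) : W.εsMap (W.εsMap h) = W.εsMap h := by
  simpa only [hW.mul_one] using W.εsMap_εsMap_mul hW h W.one

lemma comul_εsMap (hW : W.IsWeakBialgebra) (h : H) :
    W.comul (W.εsMap h) = lTensor H (W.mul (W.εsMap h)) (W.comul W.one) := by
  obtain ⟨S, hS⟩ := exists_finset (W.comul W.one)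
  have key := congrArg (TensorProduct.rid k (H ⊗[k] H) ∘ lTensor (H ⊗[k] H) (W.counit ∘ₗ W.mul h))
    (W.rTensor_comul_comul_one_eq_sum hW hS)
  conv_lhs at key => rw [hS]
  calc W.comul (W.εsMap h) = ∑ q ∈ S, W.counit (W.mul h q.2) • W.comul q.1 := by
        simp [W.εsMap_eq_sum hS]
    _ = ∑ p ∈ S, p.1 ⊗ₜ[k] ∑ q ∈ S, W.counit (W.mul h q.2) • W.mul q.1 p.2 := by
        simpa [map_sum, tmul_sum] using key
    _ = lTensor H (W.mul (W.εsMap h)) (W.comul W.one) := by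
        rw [W.εsMap_eq_sum hS, hS]
        simp [map_sum]

lemma rTensor_εsMap_comul_one (hW : W.IsWeakBialgebra) :
    rTensor H W.εsMap (W.comul W.one) = W.comul W.one := by
  obtain ⟨S, hS⟩ := exists_finset (W.comul W.one)
  have key := congrArg (rTensor H ((TensorProduct.rid k H).toLinearMap ∘ₗ lTensor H W.counit))
    (W.rTensor_comul_comul_one_eq_sum hW hS)
  conv_lhs at key => rw [hS]
  calc rTensor H W.εsMap (W.comul W.one)
      = ∑ q ∈ S, ∑ p ∈ S, (W.counit (W.mul q.1 p.2) • p.1) ⊗ₜ[k] q.2 := by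
        conv_lhs => rw [hS]
        simp [W.εsMap_eq_sum hS, sum_tmul]
    _ = W.comul W.one := by
        rw [Finset.sum_comm, hS]
        simpa [hW.counit_right, map_sum] using key.symm

lemma βg_εsMap_mem_range_rTensor (hW : W.IsWeakBialgebra) (g h : H) :
    W.βg g (W.εsMap h) ∈ range (rTensor H W.Hs.subtype) := by
  rw [Hs, ← rTensor_range]
  refine ⟨lTensor H (W.mul g ∘ₗ W.mul (W.εsMap h)) (W.comul W.one), ?_⟩
  rw [← comp_apply, rTensor_comp_lTensor, ← lTensor_comp_rTensor, comp_apply,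
    W.rTensor_εsMap_comul_one hW, βg, comp_apply, W.comul_εsMap hW, lTensor_comp, comp_apply]

lemma βg_εsMap_counital (hW : W.IsWeakBialgebra) {g : H} (hg : W.εsMap g = W.one) (h : H) :
    TensorProduct.rid k H (lTensor H W.counit (W.βg g (W.εsMap h))) = W.εsMap h := by
  obtain ⟨S, hS⟩ := exists_finset (W.comul W.one)
  rw [βg, comp_apply, W.comul_εsMap hW, hS]
  simp only [map_sum, lTensor_tmul, rid_tmul, ← hW.mul_assoc]
  rw [← W.εsMap_eq_sum hS, ← W.εsMap_εsMap_mul hW g, hg, hW.one_mul, W.εsMap_idem hW]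

end WBData

/-- For a weak bialgebra `H` and a group-like `g ∈ H`, the map
`x ↦ x₀ ⊗ (g x₁)` (i.e. `x ↦ x' ⊗ (g x'')`) defines a right `H`-comodule structure on the
vector space `H_s`, denoted `H_s^g`: it maps `H_s` into `H_s ⊗ H`, and is coassociative and
counital on `H_s`. -/
theorem grouplike_comodule_structure {k : Type} [Field k] {H : Type} [AddCommGroup H]
    [Module k H] (W : WBData k H) (hW : W.IsWeakBialgebra) (g : H) (hg : W.IsGroupLike g) :
    (∀ x ∈ W.Hs, W.βg g x ∈ LinearMap.range (LinearMap.rTensor H (W.Hs).subtype)) ∧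
    (∀ x ∈ W.Hs, (TensorProduct.assoc k H H H)
        (LinearMap.rTensor H (W.βg g) (W.βg g x)) =
      LinearMap.lTensor H W.comul (W.βg g x)) ∧
    (∀ x ∈ W.Hs, (TensorProduct.rid k H) (LinearMap.lTensor H W.counit (W.βg g x)) = x) := by
  refine ⟨?_, fun x _ => W.βg_coassoc hW hg.1.1 x, ?_⟩ <;> rintro x ⟨h, rfl⟩
  · exact W.βg_εsMap_mem_range_rTensor hW g h
  · exact W.βg_εsMap_counital hW hg.1.2 h
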